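/- With the Fock space operators e_i^∞, f_i^∞ as above, for every extended Young diagram Y of charge n and integers i, j with |i − j| > 1, e_i^∞ e_j^∞ Y = e_j^∞ e_i^∞ Y and f_i^∞ f_j^∞ Y = f_j^∞ f_i^∞ Y. -/

import Mathlib

noncomputable section
open scoped Classical

abbrev K : Type := FractionRing (MvPolynomial (Fin 2) ℚ)

def rr : K := algebraMap (MvPolynomial (Fin 2) ℚ) K (MvPolynomial.X 0)
def ss : K := algebraMap (MvPolynomial (Fin 2) ℚ) K (MvPolynomial.X 1)

/-- An extended Young diagram of charge `n`: a weakly increasing integer sequence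
eventually equal to `n`. -/
structure EYD (n : ℤ) where
  y : ℕ → ℤ
  mono : ∀ k, y k ≤ y (k + 1)
  charge : ∃ N, ∀ k, N ≤ k → y k = n

namespace EYD

variable {n : ℤ}

/-- `Y` has a convex corner on diagonal `i` at column `k`. -/
def ConvexAt (Y : EYD n) (i : ℤ) (k : ℕ) : Prop :=
  Y.y k < Y.y (k + 1) ∧ Y.y k + k + 1 = i

/-- `Y` has a concave corner on diagonal `i` at column `k`. -/
def ConcaveAt (Y : EYD n) (i : ℤ) (k : ℕ) : Prop :=
  (k = 0 ∨ ∃ j, k = j + 1 ∧ Y.y j < Y.y k) ∧ Y.y k + k = i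

/-- Replace the convex corner at column `k` by a concave one. -/
def up (Y : EYD n) (k : ℕ) (h : Y.y k < Y.y (k + 1)) : EYD n where
  y := Function.update Y.y k (Y.y k + 1)
  mono := by
    intro m
    rcases eq_or_ne m k with rfl | h1
    · rw [Function.update_self, Function.update_of_ne (show m + 1 ≠ m by omega)]
      omega
    · rcases eq_or_ne (m + 1) k with h2 | h2
      · have hm := Y.mono m
        rw [Function.update_of_ne h1, h2, Function.update_self, ← h2]
        omega
      · rw [Function.update_of_ne h1, Function.update_of_ne h2]
        exact Y.mono m
  charge := by
    obtain ⟨N, hN⟩ := Y.charge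
    exact ⟨max N (k + 1), fun m hm => by
      rw [Function.update_of_ne (show m ≠ k by omega)]
      exact hN m (by omega)⟩

/-- Replace the concave corner at column `k` by a convex one. -/
def down (Y : EYD n) (k : ℕ) (h : k = 0 ∨ ∃ j, k = j + 1 ∧ Y.y j < Y.y k) : EYD n where
  y := Function.update Y.y k (Y.y k - 1)
  mono := by
    intro m
    rcases eq_or_ne m k with rfl | h1
    · rw [Function.update_self, Function.update_of_ne (show m + 1 ≠ m by omega)]
      have := Y.mono m
      omega
    · rcases eq_or_ne (m + 1) k with h2 | h2
      · rw [Function.update_of_ne h1, h2, Function.update_self]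
        rcases h with h | ⟨j, hj, hjy⟩
        · omega
        · have : j = m := by omega
          subst this
          omega
      · rw [Function.update_of_ne h1, Function.update_of_ne h2]
        exact Y.mono m
  charge := by
    obtain ⟨N, hN⟩ := Y.charge
    exact ⟨max N (k + 1), fun m hm => by
      rw [Function.update_of_ne (show m ≠ k by omega)]
      exact hN m (by omega)⟩

/-- The action of `e_i^∞` on a diagram: turn the convex corner on diagonal `i`
into a concave one, if any. -/
def eAct (i : ℤ) (Y : EYD n) : Option (EYD n) :=
  if h : ∃ k, Y.ConvexAt i k then some (Y.up h.choose h.choose_spec.1) else none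

/-- The action of `f_i^∞` on a diagram: turn the concave corner on diagonal `i`
into a convex one, if any. -/
def fAct (i : ℤ) (Y : EYD n) : Option (EYD n) :=
  if h : ∃ k, Y.ConcaveAt i k then some (Y.down h.choose h.choose_spec.1) else none

end EYD

/-- The Fock space of charge `n`. -/
abbrev Fock (n : ℤ) : Type := EYD n →₀ K

def ovec {n : ℤ} (o : Option (EYD n)) : Fock n :=
  o.elim 0 fun Y => Finsupp.single Y 1

/-- The linear operator on Fock space induced by a partially defined map on diagrams. -/
def opOf {n : ℤ} (a : EYD n → Option (EYD n)) : Fock n →ₗ[K] Fock n :=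
  Finsupp.lsum K fun Y => LinearMap.smulRight (LinearMap.id : K →ₗ[K] K) (ovec (a Y))

/-- A diagonal operator on Fock space. -/
def diagOp {n : ℤ} (c : EYD n → K) : Fock n →ₗ[K] Fock n :=
  Finsupp.lsum K fun Y => LinearMap.smulRight (LinearMap.id : K →ₗ[K] K) (c Y • Finsupp.single Y 1)

def Eop (n i : ℤ) : Fock n →ₗ[K] Fock n := opOf (EYD.eAct i)
def Fop (n i : ℤ) : Fock n →ₗ[K] Fock n := opOf (EYD.fAct i)

/-! Since `k ↦ y k + k` is strictly increasing, a diagram has at most one convex and at most one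
concave corner on each diagonal. Flipping the corner in column `k` changes `y` only at `k`, and
when `|i - j| > 1` flipping a corner on diagonal `j` neither creates nor destroys a corner on
diagonal `i`. Hence both orders flip the same two distinct columns, and updates of a function at
distinct points commute. -/

namespace EYD

variable {n : ℤ} {Y : EYD n} {i j : ℤ} {k m : ℕ}

theorem ext {Y Z : EYD n} (h : Y.y = Z.y) : Y = Z := by
  cases Y; cases Z; simp_all

theorem strictMono_y_add_self (Y : EYD n) : StrictMono fun k : ℕ => Y.y k + k :=
  strictMono_nat_of_lt_succ fun k => by have := Y.mono k; push_cast; omega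

theorem ConvexAt.unique (hk : Y.ConvexAt i k) (hm : Y.ConvexAt i m) : k = m :=
  Y.strictMono_y_add_self.injective (show Y.y k + k = Y.y m + m by linarith [hk.2, hm.2])

theorem ConcaveAt.unique (hk : Y.ConcaveAt i k) (hm : Y.ConcaveAt i m) : k = m :=
  Y.strictMono_y_add_self.injective (show Y.y k + k = Y.y m + m by linarith [hk.2, hm.2])

theorem ConvexAt.ne (hk : Y.ConvexAt i k) (hm : Y.ConvexAt j m) (hij : i ≠ j) : k ≠ m := by
  rintro rfl
  exact hij (hk.2.symm.trans hm.2)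

theorem ConcaveAt.ne (hk : Y.ConcaveAt i k) (hm : Y.ConcaveAt j m) (hij : i ≠ j) : k ≠ m := by
  rintro rfl
  exact hij (hk.2.symm.trans hm.2)

theorem concaveAt_zero_iff : Y.ConcaveAt i 0 ↔ Y.y 0 = i := by
  simp [ConcaveAt]

theorem concaveAt_succ_iff :
    Y.ConcaveAt i (m + 1) ↔ Y.y m < Y.y (m + 1) ∧ Y.y (m + 1) + (m + 1) = i := by
  simp [ConcaveAt]

theorem up_y (hk : Y.y k < Y.y (k + 1)) : (Y.up k hk).y = Function.update Y.y k (Y.y k + 1) :=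
  rfl

theorem down_y (hk : k = 0 ∨ ∃ j, k = j + 1 ∧ Y.y j < Y.y k) :
    (Y.down k hk).y = Function.update Y.y k (Y.y k - 1) :=
  rfl

theorem up_up_comm (hkm : k ≠ m) (hk : Y.y k < Y.y (k + 1)) (hm : Y.y m < Y.y (m + 1))
    (hk' : (Y.up m hm).y k < (Y.up m hm).y (k + 1)) (hm' : (Y.up k hk).y m < (Y.up k hk).y (m + 1)) :
    (Y.up k hk).up m hm' = (Y.up m hm).up k hk' :=
  ext <| by
    simp only [up_y, Function.update_of_ne hkm, Function.update_of_ne hkm.symm]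
    exact Function.update_comm hkm _ _ _

theorem down_down_comm (hkm : k ≠ m) (hk : k = 0 ∨ ∃ j, k = j + 1 ∧ Y.y j < Y.y k)
    (hm : m = 0 ∨ ∃ j, m = j + 1 ∧ Y.y j < Y.y m)
    (hk' : k = 0 ∨ ∃ j, k = j + 1 ∧ (Y.down m hm).y j < (Y.down m hm).y k)
    (hm' : m = 0 ∨ ∃ j, m = j + 1 ∧ (Y.down k hk).y j < (Y.down k hk).y m) :
    (Y.down k hk).down m hm' = (Y.down m hm).down k hk' :=
  ext <| by
    simp only [down_y, Function.update_of_ne hkm, Function.update_of_ne hkm.symm]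
    exact Function.update_comm hkm _ _ _

theorem convexAt_up_iff (hk : Y.ConvexAt j k) (hij : 1 < |i - j|) :
    (Y.up k hk.1).ConvexAt i m ↔ Y.ConvexAt i m := by
  obtain ⟨-, hdiag⟩ := hk
  have := Y.mono m
  have := lt_abs.mp hij
  simp only [ConvexAt, up_y, Function.update_apply]
  split_ifs <;> subst_vars <;> omega

theorem concaveAt_down_iff (hk : Y.ConcaveAt j k) (hij : 1 < |i - j|) :
    (Y.down k hk.1).ConcaveAt i m ↔ Y.ConcaveAt i m := by
  have hdiag := hk.2
  have := lt_abs.mp hij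
  cases m with
  | zero =>
    simp only [concaveAt_zero_iff, down_y, Function.update_apply]
    split_ifs <;> subst_vars <;> omega
  | succ m =>
    have := Y.mono m
    simp only [concaveAt_succ_iff, down_y, Function.update_apply]
    split_ifs <;> subst_vars <;> omega

theorem eAct_eq_some (hk : Y.ConvexAt i k) : Y.eAct i = some (Y.up k hk.1) := by
  have hex : ∃ m, Y.ConvexAt i m := ⟨k, hk⟩
  rw [eAct, dif_pos hex]
  congr 1
  exact ext (by rw [up_y, up_y, hex.choose_spec.unique hk])

theorem eAct_eq_none (h : ¬∃ k, Y.ConvexAt i k) : Y.eAct i = none :=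
  dif_neg h

theorem fAct_eq_some (hk : Y.ConcaveAt i k) : Y.fAct i = some (Y.down k hk.1) := by
  have hex : ∃ m, Y.ConcaveAt i m := ⟨k, hk⟩
  rw [fAct, dif_pos hex]
  congr 1
  exact ext (by rw [down_y, down_y, hex.choose_spec.unique hk])

theorem fAct_eq_none (h : ¬∃ k, Y.ConcaveAt i k) : Y.fAct i = none :=
  dif_neg h

theorem eAct_bind_comm (hij : 1 < |i - j|) (Y : EYD n) :
    (Y.eAct j).bind (eAct i) = (Y.eAct i).bind (eAct j) := by
  have hji : 1 < |j - i| := by rwa [abs_sub_comm]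
  by_cases hi : ∃ k, Y.ConvexAt i k <;> by_cases hj : ∃ k, Y.ConvexAt j k
  · obtain ⟨ki, hki⟩ := hi
    obtain ⟨kj, hkj⟩ := hj
    rw [eAct_eq_some hki, eAct_eq_some hkj, Option.bind_some, Option.bind_some,
      eAct_eq_some ((convexAt_up_iff hkj hij).2 hki), eAct_eq_some ((convexAt_up_iff hki hji).2 hkj),
      up_up_comm (hkj.ne hki (by rintro rfl; simp at hij))]
  · obtain ⟨ki, hki⟩ := hi
    rw [eAct_eq_some hki, eAct_eq_none hj, Option.bind_some, Option.bind_none,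
      eAct_eq_none fun ⟨m, hm⟩ => hj ⟨m, (convexAt_up_iff hki hji).1 hm⟩]
  · obtain ⟨kj, hkj⟩ := hj
    rw [eAct_eq_some hkj, eAct_eq_none hi, Option.bind_some, Option.bind_none,
      eAct_eq_none fun ⟨m, hm⟩ => hi ⟨m, (convexAt_up_iff hkj hij).1 hm⟩]
  · rw [eAct_eq_none hi, eAct_eq_none hj, Option.bind_none, Option.bind_none]

theorem fAct_bind_comm (hij : 1 < |i - j|) (Y : EYD n) :
    (Y.fAct j).bind (fAct i) = (Y.fAct i).bind (fAct j) := by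
  have hji : 1 < |j - i| := by rwa [abs_sub_comm]
  by_cases hi : ∃ k, Y.ConcaveAt i k <;> by_cases hj : ∃ k, Y.ConcaveAt j k
  · obtain ⟨ki, hki⟩ := hi
    obtain ⟨kj, hkj⟩ := hj
    rw [fAct_eq_some hki, fAct_eq_some hkj, Option.bind_some, Option.bind_some,
      fAct_eq_some ((concaveAt_down_iff hkj hij).2 hki),
      fAct_eq_some ((concaveAt_down_iff hki hji).2 hkj),
      down_down_comm (hkj.ne hki (by rintro rfl; simp at hij))]
  · obtain ⟨ki, hki⟩ := hi
    rw [fAct_eq_some hki, fAct_eq_none hj, Option.bind_some, Option.bind_none,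
      fAct_eq_none fun ⟨m, hm⟩ => hj ⟨m, (concaveAt_down_iff hki hji).1 hm⟩]
  · obtain ⟨kj, hkj⟩ := hj
    rw [fAct_eq_some hkj, fAct_eq_none hi, Option.bind_some, Option.bind_none,
      fAct_eq_none fun ⟨m, hm⟩ => hi ⟨m, (concaveAt_down_iff hkj hij).1 hm⟩]
  · rw [fAct_eq_none hi, fAct_eq_none hj, Option.bind_none, Option.bind_none]

end EYD

section Fock

variable {n : ℤ} (a b : EYD n → Option (EYD n))

theorem opOf_single (Y : EYD n) : opOf a (Finsupp.single Y 1) = ovec (a Y) := by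
  rw [opOf, Finsupp.lsum_single, LinearMap.smulRight_apply, LinearMap.id_apply, one_smul]

theorem opOf_ovec (o : Option (EYD n)) : opOf a (ovec o) = ovec (o.bind a) := by
  cases o with
  | none => exact map_zero _
  | some Y => exact opOf_single a Y

theorem opOf_opOf_single_comm {Y : EYD n} (h : (b Y).bind a = (a Y).bind b) :
    opOf a (opOf b (Finsupp.single Y 1)) = opOf b (opOf a (Finsupp.single Y 1)) := by
  rw [opOf_single, opOf_single, opOf_ovec, opOf_ovec, h]

end Fock

/-- For `|i − j| > 1`, the Fock space operators `e_i^∞, e_j^∞` commute, and so do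
`f_i^∞, f_j^∞`, on every basis vector. -/
theorem stmt_10 (n i j : ℤ) (hij : 1 < |i - j|) (Y : EYD n) :
    Eop n i (Eop n j (Finsupp.single Y 1)) = Eop n j (Eop n i (Finsupp.single Y 1)) ∧
    Fop n i (Fop n j (Finsupp.single Y 1)) = Fop n j (Fop n i (Finsupp.single Y 1)) :=
  ⟨opOf_opOf_single_comm _ _ (EYD.eAct_bind_comm hij Y),
    opOf_opOf_single_comm _ _ (EYD.fAct_bind_comm hij Y)⟩
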